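/- For any real parameters α and τ, the function f(z) = (1/Φ(τ)) · φ(z) · Φ(τ·√(1+α²) + α·z) integrates to 1 over the real line, where φ and Φ denote the standard normal density and distribution function respectively. -/

import Mathlib

/-!
With `c = √(1 + b²)`, a linear change of variables gives `Φ(c x + b z) = c ∫_{w ≤ x} φ(c w + b z) dw`.
Since `c² = 1 + b²`, the quadratic form `z² + (c w + b z)²` is symmetric in `z` and `w`, so
`φ(z) φ(c w + b z) = φ(w) φ(c z + b w)`. Swapping the order of integration therefore turns
`∫ φ(z) Φ(c x + b z) dz` into `∫_{w ≤ x} φ(w) dw = Φ(x)`, i.e. `E[Φ(a + b Z)] = Φ(a / √(1 + b²))`.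
Taking `a = τ √(1 + α²)` shows that the ESN density has total mass `Φ(τ) / Φ(τ) = 1`.
-/

open MeasureTheory Real

noncomputable def phi (x : ℝ) : ℝ := (Real.sqrt (2 * Real.pi))⁻¹ * Real.exp (-x ^ 2 / 2)

noncomputable def Phi (x : ℝ) : ℝ := ∫ t in Set.Iic x, phi t

open ProbabilityTheory Set

lemma integral_comp_mul_add {E : Type*} [NormedAddCommGroup E] [NormedSpace ℝ E]
    (g : ℝ → E) (c d : ℝ) : ∫ x, g (c * x + d) = |c⁻¹| • ∫ y, g y := by
  rw [Measure.integral_comp_mul_left (fun y ↦ g (y + d)), integral_add_right_eq_self]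

lemma phi_eq_gaussianPDFReal : phi = gaussianPDFReal 0 1 := by
  ext x
  simp [phi, gaussianPDFReal]

lemma phi_nonneg (x : ℝ) : 0 ≤ phi x := by
  rw [phi_eq_gaussianPDFReal]
  exact gaussianPDFReal_nonneg _ _ _

@[fun_prop]
lemma continuous_phi : Continuous phi := by
  unfold phi
  fun_prop

lemma integrable_phi : Integrable phi := by
  rw [phi_eq_gaussianPDFReal]
  exact integrable_gaussianPDFReal _ _

lemma integral_phi : ∫ x, phi x = 1 := by
  rw [phi_eq_gaussianPDFReal]
  exact integral_gaussianPDFReal_eq_one _ one_ne_zero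

lemma Phi_pos (x : ℝ) : 0 < Phi x := by
  have h_supp : Function.support phi = univ := by
    rw [phi_eq_gaussianPDFReal]
    exact eq_univ_of_forall fun y ↦ (gaussianPDFReal_pos _ _ y one_ne_zero).ne'
  rw [Phi, setIntegral_pos_iff_support_of_nonneg_ae (.of_forall phi_nonneg)
    integrable_phi.integrableOn, h_supp, univ_inter]
  simp

lemma integrable_phi_mul_add {c : ℝ} (hc : c ≠ 0) (d : ℝ) :
    Integrable fun x ↦ phi (c * x + d) :=
  (integrable_phi.comp_add_right d).comp_mul_left' hc

lemma integral_phi_mul_add (c d : ℝ) : ∫ x, phi (c * x + d) = |c⁻¹| := by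
  rw [integral_comp_mul_add, integral_phi, smul_eq_mul, mul_one]

lemma Phi_mul_add {c : ℝ} (hc : 0 < c) (x d : ℝ) :
    Phi (c * x + d) = c * ∫ w in Iic x, phi (c * w + d) := by
  have h_indicator : (Iic x).indicator (fun w ↦ phi (c * w + d)) =
      fun w ↦ (Iic (c * x + d)).indicator phi (c * w + d) := by
    ext w
    simp only [indicator, mem_Iic, add_le_add_iff_right, mul_le_mul_iff_right₀ hc]
  rw [← integral_indicator measurableSet_Iic, h_indicator, integral_comp_mul_add,
    integral_indicator measurableSet_Iic, abs_of_pos (inv_pos.2 hc), smul_eq_mul,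
    mul_inv_cancel_left₀ hc.ne', Phi]

lemma integrable_phi_mul_phi_mul_add {c : ℝ} (hc : c ≠ 0) (b : ℝ) :
    Integrable fun p : ℝ × ℝ ↦ phi p.1 * phi (c * p.2 + b * p.1) := by
  have h_norm (z : ℝ) : ∫ w, ‖phi z * phi (c * w + b * z)‖ = |c⁻¹| * phi z := by
    simp_rw [Real.norm_of_nonneg (mul_nonneg (phi_nonneg _) (phi_nonneg _))]
    rw [integral_const_mul, integral_phi_mul_add, mul_comm]
  rw [Measure.volume_eq_prod, integrable_prod_iff (by fun_prop)]
  refine ⟨.of_forall fun z ↦ (integrable_phi_mul_add hc (b * z)).const_mul (phi z), ?_⟩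
  simp_rw [h_norm]
  exact integrable_phi.const_mul _

lemma phi_mul_phi_mul_add_comm {b c : ℝ} (hc : c ^ 2 = 1 + b ^ 2) (z w : ℝ) :
    phi z * phi (c * w + b * z) = phi w * phi (c * z + b * w) := by
  simp only [phi]
  rw [mul_mul_mul_comm, mul_mul_mul_comm _ (exp _), ← exp_add, ← exp_add]
  congr 2
  linear_combination (z ^ 2 - w ^ 2) / 2 * hc

lemma integral_phi_mul_Phi_mul_add {b c : ℝ} (hc_pos : 0 < c) (hc : c ^ 2 = 1 + b ^ 2) (x : ℝ) :
    ∫ z, phi z * Phi (c * x + b * z) = Phi x := by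
  have h_int : Integrable (Function.uncurry fun z w ↦ phi z * phi (c * w + b * z))
      (volume.prod (volume.restrict (Iic x))) :=
    (integrable_phi_mul_phi_mul_add hc_pos.ne' b).mono_measure
      (Measure.prod_mono le_rfl Measure.restrict_le_self)
  have h_fiber (w : ℝ) : ∫ z, phi z * phi (c * w + b * z) = c⁻¹ * phi w := by
    simp_rw [phi_mul_phi_mul_add_comm hc]
    rw [integral_const_mul, integral_phi_mul_add, abs_of_pos (inv_pos.2 hc_pos), mul_comm]
  calc ∫ z, phi z * Phi (c * x + b * z)
      = c * ∫ z, ∫ w in Iic x, phi z * phi (c * w + b * z) := by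
        rw [← integral_const_mul]
        congr 1 with z
        rw [Phi_mul_add hc_pos, mul_left_comm, ← integral_const_mul]
    _ = c * ∫ w in Iic x, ∫ z, phi z * phi (c * w + b * z) := by
        rw [integral_integral_swap h_int]
    _ = Phi x := by
        simp_rw [h_fiber]
        rw [integral_const_mul, mul_inv_cancel_left₀ hc_pos.ne', Phi]

lemma integral_phi_mul_Phi_add_mul (a b : ℝ) :
    ∫ z, phi z * Phi (a + b * z) = Phi (a / √(1 + b ^ 2)) := by
  have hc_pos : 0 < √(1 + b ^ 2) := sqrt_pos.2 (by positivity)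
  have hc : √(1 + b ^ 2) ^ 2 = 1 + b ^ 2 := sq_sqrt (by positivity)
  rw [← integral_phi_mul_Phi_mul_add hc_pos hc, mul_div_cancel₀ _ hc_pos.ne']

theorem esn_density_integrates_to_one (α τ : ℝ) :
    ∫ z : ℝ, (Phi τ)⁻¹ * phi z * Phi (τ * Real.sqrt (1 + α ^ 2) + α * z) = 1 := by
  simp_rw [mul_assoc, integral_const_mul, integral_phi_mul_Phi_add_mul,
    mul_div_cancel_right₀ _ (sqrt_pos.2 (by positivity : (0 : ℝ) < 1 + α ^ 2)).ne']
  exact inv_mul_cancel₀ (Phi_pos τ).ne'
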